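/- arXiv:2311.07415 — 4 statements merged into one kernel-verified Lean document; each statement's English description precedes it below -/
import Mathlib

section
/- The Laplace mechanism is ε-differentially private: if f : χ → ℝ has L1-sensitivity at most Δ (i.e. |f(x) − f(x')| ≤ Δ for all neighbouring x, x'), and A(x) = f(x) + Y where Y ~ Lap(Δ/ε), then for all neighbouring x, x' and all measurable Out ⊆ ℝ, Pr(A(x) ∈ Out) ≤ e^ε · Pr(A(x') ∈ Out). -/
/-!
The law of `c + Y` with `Y ~ Lap(b)` has density `x ↦ (2b)⁻¹ exp(-|x - c|/b)`. By the triangle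
inequality, moving the centre from `c'` to `c` multiplies this density pointwise by at most
`exp(|c - c'|/b)`, and for `b = Δ/ε` and `|c - c'| ≤ Δ` that factor is at most `e^ε`.
Integrating the pointwise bound over `Out` gives the inequality of probabilities.
-/

open MeasureTheory

/-- The Laplace distribution with mean 0 and scale `b`, given by the density
`x ↦ (1/(2b)) · exp(−|x|/b)` with respect to Lebesgue measure. -/
noncomputable def laplaceMeasure (b : ℝ) : Measure ℝ :=
  volume.withDensity fun x => ENNReal.ofReal ((2 * b)⁻¹ * Real.exp (-|x| / b))

theorem map_const_add_withDensity {G : Type*} [AddGroup G] [MeasurableSpace G] [MeasurableAdd G]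
    (μ : Measure G) [μ.IsAddLeftInvariant] (f : G → ENNReal) (c : G) :
    (μ.withDensity f).map (c + ·) = μ.withDensity fun x => f (-c + x) := by
  ext s hs
  rw [Measure.map_apply (measurable_const_add c) hs,
    withDensity_apply _ (measurable_const_add c hs), withDensity_apply _ hs]
  simpa only [neg_add_cancel_left] using
    (measurePreserving_add_left μ c).setLIntegral_comp_preimage_emb (measurableEmbedding_addLeft c)
      (fun x => f (-c + x)) s

noncomputable def laplaceDensity (b c x : ℝ) : ℝ := (2 * b)⁻¹ * Real.exp (-|x - c| / b)

theorem laplaceDensity_le_exp_mul {b : ℝ} (hb : 0 < b) (c c' x : ℝ) :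
    laplaceDensity b c x ≤ Real.exp (|c - c'| / b) * laplaceDensity b c' x := by
  have hdist : -|x - c| / b ≤ |c - c'| / b + -|x - c'| / b := by
    rw [← add_div]
    gcongr
    linarith [abs_sub_le x c c']
  rw [laplaceDensity, laplaceDensity, mul_left_comm, ← Real.exp_add]
  gcongr

theorem map_const_add_laplaceMeasure (b c : ℝ) :
    (laplaceMeasure b).map (c + ·) =
      volume.withDensity fun x => ENNReal.ofReal (laplaceDensity b c x) := by
  rw [laplaceMeasure, map_const_add_withDensity]
  simp only [laplaceDensity, neg_add_eq_sub]

theorem map_const_add_laplaceMeasure_le_smul {b : ℝ} (hb : 0 < b) (c c' : ℝ) :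
    (laplaceMeasure b).map (c + ·) ≤
      ENNReal.ofReal (Real.exp (|c - c'| / b)) • (laplaceMeasure b).map (c' + ·) := by
  rw [map_const_add_laplaceMeasure, map_const_add_laplaceMeasure,
    ← withDensity_smul' _ _ ENNReal.ofReal_ne_top]
  refine withDensity_mono (ae_of_all _ fun x => ?_)
  rw [Pi.smul_apply, smul_eq_mul, ← ENNReal.ofReal_mul (Real.exp_pos _).le]
  exact ENNReal.ofReal_le_ofReal (laplaceDensity_le_exp_mul hb c c' x)

/-- The Laplace mechanism is `ε`-differentially private: if `f` has
L1-sensitivity at most `Δ` over a neighbouring relation `N`, and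
`A(x) = f(x) + Y` with `Y ~ Lap(Δ/ε)`, then for all neighbouring `x, x'` and all
measurable `Out ⊆ ℝ`, `Pr(A(x) ∈ Out) ≤ e^ε · Pr(A(x') ∈ Out)`. -/
theorem laplace_mechanism_dp {χ : Type*} (N : χ → χ → Prop) (f : χ → ℝ)
    (Δ ε : ℝ) (hΔ : 0 < Δ) (hε : 0 < ε)
    (hsens : ∀ x x', N x x' → |f x - f x'| ≤ Δ) :
    ∀ x x', N x x' → ∀ Out : Set ℝ, MeasurableSet Out →
      Measure.map (fun y => f x + y) (laplaceMeasure (Δ / ε)) Out ≤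
        ENNReal.ofReal (Real.exp ε) *
          Measure.map (fun y => f x' + y) (laplaceMeasure (Δ / ε)) Out := by
  intro x x' hN Out _
  have hb : 0 < Δ / ε := div_pos hΔ hε
  have hratio : |f x - f x'| / (Δ / ε) ≤ ε := by
    rw [div_le_iff₀ hb, mul_div_cancel₀ _ hε.ne']
    exact hsens x x' hN
  calc Measure.map (fun y => f x + y) (laplaceMeasure (Δ / ε)) Out
      ≤ ENNReal.ofReal (Real.exp (|f x - f x'| / (Δ / ε))) *
          Measure.map (fun y => f x' + y) (laplaceMeasure (Δ / ε)) Out :=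
        Measure.le_iff'.1 (map_const_add_laplaceMeasure_le_smul hb (f x) (f x')) Out
    _ ≤ _ := by gcongr
end

section
/- Packing lower bound (pattern-length bound): Let P have length m and k < m. Suppose Alg is an ε-differentially private algorithm on strings of length n (n a multiple of m, n/m ≥ 2) such that whenever S contains a window at some j with dist_H(S[j,j+m-1],P) ≤ k, Alg outputs, with probability ≥ 2/3, a position i with dist_H(S[i,i+m-1],P) ≤ k + α, where α < m − k. Then m ≥ (2ε)^{-1}(ln(n/(2m)) + ln(2/3)). -/
/-!
Place `P` on the blocks starting at `0, 2m, 4m, …` of a string that is otherwise filled with a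
letter `d` not occurring in `P`. This gives `N ≥ n / (2m)` strings, any two within Hamming
distance `2m`. A window within distance `< m` of `P` must overlap the block carrying `P`, so
the utility events of these strings are pairwise disjoint. By group privacy, the output
distribution on the first string gives each of them mass at least `e^{-2mε} · 2/3`, hence
`N · 2/3 ≤ e^{2mε}`.
-/

open Finset Function Real
open scoped ENNReal

section Hamming

variable {ι : Type*} [Fintype ι] {β : ι → Type*} [∀ i, DecidableEq (β i)]

theorem hammingDist_update_self [DecidableEq ι] {x : ∀ i, β i} {i : ι} {b : β i}
    (h : x i ≠ b) :
    hammingDist x (update x i b) = 1 := by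
  rw [hammingDist, card_eq_one]
  refine ⟨i, ?_⟩
  ext j
  rcases eq_or_ne j i with rfl | hj <;> simp [*]

theorem hammingDist_update_add_one [DecidableEq ι] {x y : ∀ i, β i} {i : ι} (h : x i ≠ y i) :
    hammingDist (update x i (y i)) y + 1 = hammingDist x y := by
  have : ({j | update x i (y i) j ≠ y j} : Finset ι) =
      ({j | x j ≠ y j} : Finset ι).erase i := by
    ext j
    rcases eq_or_ne j i with rfl | hj <;> simp [*]
  rw [hammingDist, hammingDist, this, card_erase_add_one (by simpa using h)]

theorem le_pow_hammingDist_mul {f : (∀ i, β i) → ℝ≥0∞} {c : ℝ≥0∞}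
    (h : ∀ x y, hammingDist x y = 1 → f x ≤ c * f y) (x y : ∀ i, β i) :
    f x ≤ c ^ hammingDist x y * f y := by
  classical
  induction hxy : hammingDist x y generalizing x with
  | zero => simp [hammingDist_eq_zero.mp hxy]
  | succ d ih =>
    obtain ⟨i, hi⟩ := ne_iff.mp (hammingDist_pos.mp (by omega : 0 < hammingDist x y))
    calc f x ≤ c * f (update x i (y i)) := h _ _ (hammingDist_update_self hi)
      _ ≤ c * (c ^ d * f y) := by
        gcongr
        exact ih _ (by have := hammingDist_update_add_one hi; omega)
      _ = c ^ (d + 1) * f y := by ring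

end Hamming

theorem toOuterMeasure_le_ofReal_exp_mul {ι β γ : Type*} [Fintype ι] [DecidableEq β]
    {Alg : (ι → β) → PMF γ} {ε : ℝ} (hε : 0 ≤ ε)
    (hDP : ∀ S S' : ι → β, hammingDist S S' = 1 → ∀ Out : Set γ,
      (Alg S).toOuterMeasure Out ≤ ENNReal.ofReal (exp ε) * (Alg S').toOuterMeasure Out)
    {S S' : ι → β} {D : ℕ} (hD : hammingDist S S' ≤ D) (Out : Set γ) :
    (Alg S).toOuterMeasure Out ≤ ENNReal.ofReal (exp (D * ε)) * (Alg S').toOuterMeasure Out := by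
  rw [exp_nat_mul, ENNReal.ofReal_pow (exp_pos ε).le]
  calc (Alg S).toOuterMeasure Out
        ≤ ENNReal.ofReal (exp ε) ^ hammingDist S S' * (Alg S').toOuterMeasure Out :=
        le_pow_hammingDist_mul (f := fun S => (Alg S).toOuterMeasure Out) (hDP · · · Out) S S'
    _ ≤ _ := by
      gcongr
      exact ENNReal.one_le_ofReal.mpr (one_le_exp hε)

theorem PMF.card_mul_le_of_pairwiseDisjoint {α ι : Type*} (p : PMF α) {s : Finset ι}
    {B : ι → Set α} (hB : (s : Set ι).PairwiseDisjoint B) {a c : ℝ≥0∞}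
    (h : ∀ r ∈ s, a ≤ c * p.toOuterMeasure (B r)) : #s * a ≤ c := by
  let : MeasurableSpace α := ⊤
  calc #s * a = ∑ r ∈ s, a := by simp
    _ ≤ ∑ r ∈ s, c * p.toMeasure (B r) := by
      gcongr with r hr
      rw [p.toMeasure_apply_eq_toOuterMeasure_apply trivial]
      exact h r hr
    _ = c * p.toMeasure (⋃ r ∈ s, B r) := by
      rw [← mul_sum, MeasureTheory.measure_biUnion_finset hB fun _ _ => trivial]
    _ ≤ c := by
      grw [MeasureTheory.prob_le_one, mul_one]

section Strings

variable {σ : Type*} {m n : ℕ}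

/-- Indices are taken mod `n`, but for `i ≤ n - m` the window does not wrap around. -/
def window (S : Fin n → σ) (hn : 0 < n) (i : ℕ) : Fin m → σ :=
  fun t => S ⟨(i + t) % n, Nat.mod_lt _ hn⟩

def approxOccurrences [DecidableEq σ] (S : Fin n → σ) (hn : 0 < n) (P : Fin m → σ)
    (k : ℕ) : Set ℕ :=
  {i | i ≤ n - m ∧ hammingDist (window S hn i) P ≤ k}

def placeAt (P : Fin m → σ) (d : σ) (a : ℕ) : Fin n → σ :=
  fun x => if h : a ≤ x ∧ x < a + m then P ⟨x - a, by omega⟩ else d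

theorem window_placeAt_self (hn : 0 < n) (P : Fin m → σ) (d : σ) {a : ℕ} (ha : a + m ≤ n) :
    window (placeAt P d a : Fin n → σ) hn a = P := by
  funext t
  have : (a + t) % n = a + t := Nat.mod_eq_of_lt (by omega)
  simp [window, placeAt, this]

theorem window_placeAt_of_disjoint (hn : 0 < n) (P : Fin m → σ) (d : σ) {a i : ℕ}
    (hi : i + m ≤ n) (h : i + m ≤ a ∨ a + m ≤ i) :
    (window (placeAt P d a : Fin n → σ) hn i : Fin m → σ) = fun _ => d := by
  funext t
  have : (i + t) % n = i + t := Nat.mod_eq_of_lt (by omega)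
  simp only [window, placeAt, this]
  exact dif_neg (by omega)

theorem hammingDist_const_left [DecidableEq σ] {ι : Type*} [Fintype ι] {x : ι → σ} {d : σ}
    (hd : d ∉ Set.range x) : hammingDist (fun _ => d) x = Fintype.card ι := by
  rw [hammingDist, filter_true_of_mem, card_univ]
  exact fun i _ h => hd ⟨i, h.symm⟩

theorem approxOccurrences_placeAt_subset [DecidableEq σ] (hn : 0 < n) (hmn : m ≤ n)
    {P : Fin m → σ} {d : σ} (hd : d ∉ Set.range P) (a : ℕ) {k : ℕ} (hk : k < m) :
    approxOccurrences (placeAt P d a : Fin n → σ) hn P k ⊆ {i | a < i + m ∧ i < a + m} := by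
  rintro i ⟨hi, hdist⟩
  show a < i + m ∧ i < a + m
  by_contra h
  rw [window_placeAt_of_disjoint hn P d (by omega) (by omega),
    hammingDist_const_left hd, Fintype.card_fin] at hdist
  omega

theorem hammingDist_placeAt_const_le [DecidableEq σ] (P : Fin m → σ) (d : σ) (a : ℕ) :
    hammingDist (placeAt P d a : Fin n → σ) (fun _ => d) ≤ m := by
  calc hammingDist (placeAt P d a : Fin n → σ) (fun _ => d) ≤ #(Ico a (a + m)) := by
        refine card_le_card_of_injOn Fin.val (fun x hx => ?_) Fin.val_injective.injOn
        by_contra h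
        simp_all [placeAt]
    _ = m := by simp

theorem hammingDist_placeAt_le [DecidableEq σ] (P : Fin m → σ) (d : σ) (a b : ℕ) :
    hammingDist (placeAt P d a : Fin n → σ) (placeAt P d b) ≤ 2 * m := by
  grw [hammingDist_triangle _ (fun _ => d), hammingDist_comm (fun _ => d),
    hammingDist_placeAt_const_le, hammingDist_placeAt_const_le]
  omega

end Strings

theorem pairwise_disjoint_blocks (m : ℕ) :
    Pairwise (Disjoint on fun r : ℕ => {i : ℕ | 2 * r * m < i + m ∧ i < 2 * r * m + m}) := by
  have key : ∀ r r', r < r' → 2 * r * m + 2 * m ≤ 2 * r' * m := fun r r' h => by nlinarith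
  intro r r' hne
  rw [onFun, Set.disjoint_left]
  rintro i ⟨h₁, h₂⟩ ⟨h₃, h₄⟩
  rcases hne.lt_or_gt with h | h
  · have := key r r' h; omega
  · have := key r' r h; omega

theorem two_mul_mul_add_le_of_lt {n m r : ℕ} (hr : r < (n / m + 1) / 2) :
    2 * r * m + m ≤ n :=
  calc 2 * r * m + m = (2 * r + 1) * m := by ring
    _ ≤ n / m * m := Nat.mul_le_mul_right m (by omega)
    _ ≤ n := Nat.div_mul_le_self n m

theorem div_two_mul_le_of_dvd {n m : ℕ} (hmod : m ∣ n) :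
    (n : ℝ) / (2 * m) ≤ ((n / m + 1) / 2 : ℕ) := by
  obtain rfl | hm := m.eq_zero_or_pos
  · simp
  rw [div_le_iff₀ (by positivity)]
  exact_mod_cast calc n = n / m * m := (Nat.div_mul_cancel hmod).symm
    _ ≤ 2 * ((n / m + 1) / 2) * m := Nat.mul_le_mul_right m (by omega)
    _ = (n / m + 1) / 2 * (2 * m) := by ring

theorem inv_mul_log_add_log_le {ε t x a : ℝ} (hε : 0 < ε) (hx : 0 < x) (ha : 0 < a)
    (h : x * a ≤ exp (ε * t)) : ε⁻¹ * (log x + log a) ≤ t := by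
  rw [inv_mul_le_iff₀ hε, ← log_mul hx.ne' ha.ne']
  exact (log_le_iff_le_exp (by positivity)).mpr h

theorem packing_lower_bound_pattern_length_general {σ : Type*} [DecidableEq σ]
    {n m k α : ℕ} (hm : 0 < m) (hmn : m ≤ n) (hmod : m ∣ n)
    (P : Fin m → σ) (hdollar : ∃ d : σ, d ∉ Set.range P)
    (hα : α < m - k)
    (ε : ℝ) (hε : 0 < ε) (Alg : (Fin n → σ) → PMF ℕ)
    (hDP : ∀ S S' : Fin n → σ, hammingDist S S' = 1 → ∀ Out : Set ℕ,
      (Alg S).toOuterMeasure Out ≤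
        ENNReal.ofReal (Real.exp ε) * (Alg S').toOuterMeasure Out)
    (hUtil : ∀ S : Fin n → σ,
      (∃ j, j ≤ n - m ∧
        hammingDist
          (fun t : Fin m => S ⟨(j + t.1) % n, Nat.mod_lt _ (lt_of_lt_of_le hm hmn)⟩) P ≤ k) →
      (2 / 3 : ENNReal) ≤ (Alg S).toOuterMeasure
        {i | i ≤ n - m ∧
          hammingDist
            (fun t : Fin m => S ⟨(i + t.1) % n, Nat.mod_lt _ (lt_of_lt_of_le hm hmn)⟩) P ≤
            k + α}) :
    (2 * ε)⁻¹ * (Real.log ((n : ℝ) / (2 * m)) + Real.log (2 / 3)) ≤ (m : ℝ) := by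
  obtain ⟨d, hd⟩ := hdollar
  have hn : 0 < n := hm.trans_le hmn
  set N := (n / m + 1) / 2
  let S : ℕ → Fin n → σ := fun r => placeAt P d (2 * r * m)
  let E : ℕ → Set ℕ := fun r => approxOccurrences (S r) hn P (k + α)
  have hlow : ∀ r ∈ range N,
      2 / 3 ≤ ENNReal.ofReal (exp ((2 * m : ℕ) * ε)) * (Alg (S 0)).toOuterMeasure (E r) := by
    intro r hr
    have hfit := two_mul_mul_add_le_of_lt (mem_range.mp hr)
    have hocc : hammingDist (window (S r) hn (2 * r * m)) P ≤ k := by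
      rw [window_placeAt_self hn P d hfit, hammingDist_self]; omega
    exact (hUtil (S r) ⟨2 * r * m, by omega, hocc⟩).trans
      (toOuterMeasure_le_ofReal_exp_mul hε.le hDP (hammingDist_placeAt_le P d _ _) _)
  have hdisj : (range N : Set ℕ).PairwiseDisjoint E :=
    Set.PairwiseDisjoint.mono ((pairwise_disjoint_blocks m).set_pairwise _) fun r =>
      approxOccurrences_placeAt_subset hn hmn hd _ (by omega)
  have hcount := ENNReal.toReal_mono ENNReal.ofReal_ne_top
    ((Alg (S 0)).card_mul_le_of_pairwiseDisjoint hdisj hlow)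
  rw [card_range, ENNReal.toReal_ofReal (exp_pos _).le] at hcount
  refine inv_mul_log_add_log_le (by positivity) (by positivity) (by norm_num) ?_
  calc (n : ℝ) / (2 * m) * (2 / 3) ≤ N * (2 / 3) := by gcongr; exact div_two_mul_le_of_dvd hmod
    _ ≤ exp (2 * ε * m) := by simpa [mul_comm, mul_left_comm] using hcount

/-- Packing lower bound (pattern-length bound): any `ε`-differentially private
algorithm on strings of length `n` that, whenever some window of `S` is within
Hamming distance `k` of `P`, outputs with probability at least `2/3` a position
whose window is within distance `k + α` of `P` (with `α < m − k`), must have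
`m ≥ (2ε)⁻¹ (ln(n/(2m)) + ln(2/3))`. -/
theorem packing_lower_bound_pattern_length {σ : Type*} [DecidableEq σ]
    {n m k α : ℕ} (hm : 0 < m) (hmn : m ≤ n) (hmod : m ∣ n) (h2 : 2 ≤ n / m)
    (P : Fin m → σ) (hdollar : ∃ d : σ, d ∉ Set.range P)
    (hk : k < m) (hα : α < m - k)
    (ε : ℝ) (hε : 0 < ε) (Alg : (Fin n → σ) → PMF ℕ)
    (hDP : ∀ S S' : Fin n → σ, hammingDist S S' = 1 → ∀ Out : Set ℕ,
      (Alg S).toOuterMeasure Out ≤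
        ENNReal.ofReal (Real.exp ε) * (Alg S').toOuterMeasure Out)
    (hUtil : ∀ S : Fin n → σ,
      (∃ j, j ≤ n - m ∧
        hammingDist
          (fun t : Fin m => S ⟨(j + t.1) % n, Nat.mod_lt _ (lt_of_lt_of_le hm hmn)⟩) P ≤ k) →
      (2 / 3 : ENNReal) ≤ (Alg S).toOuterMeasure
        {i | i ≤ n - m ∧
          hammingDist
            (fun t : Fin m => S ⟨(i + t.1) % n, Nat.mod_lt _ (lt_of_lt_of_le hm hmn)⟩) P ≤
            k + α}) :
    (2 * ε)⁻¹ * (Real.log ((n : ℝ) / (2 * m)) + Real.log (2 / 3)) ≤ (m : ℝ) :=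
  packing_lower_bound_pattern_length_general hm hmn hmod P hdollar hα ε hε Alg hDP hUtil
end

section
/- Packing lower bound (additive-error bound): Let P have length m and k < m, and let α < m − k − 1. Suppose Alg is an ε-differentially private algorithm on strings of length n (n a multiple of m) such that whenever S contains a window at distance ≤ k from P, Alg outputs with probability ≥ 2/3 a position i with dist_H(S[i,i+m-1],P) ≤ k + α. Then α ≥ (2ε)^{-1}(ln(n/(2m)) + ln(2/3)) − 1. -/
/-!
Cut the text into blocks of length `m`. Let `S_j` carry `P` with its first `k + α + 1` letters
overwritten by `d ∉ range P` on every even block, except that on block `j` only the first `k`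
letters are overwritten, and `d` on every odd block; this is
`blockString d P (update (fun _ => k + α + 1) j k)`. Every window of `S_j` that does not meet
block `j` misses at least `k + α + 1` letters of `P`, so the accepted outputs for `S_0, S_2, …`
lie in pairwise disjoint sets, each of probability `≥ 2/3` under its own input. The inputs are
pairwise at Hamming distance `≤ 2 (α + 1)`, so group privacy transfers these probabilities to a
single `Alg S_0` at the cost `e^{2 (α + 1) ε}`, giving `(n / 2m) · (2/3) ≤ e^{2 (α + 1) ε}`.
-/

open Finset Function

section Hamming

variable {ι : Type*} [Fintype ι] {β : ι → Type*} [∀ i, DecidableEq (β i)]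

theorem hammingDist_update_eq_one [DecidableEq ι] {x : ∀ i, β i} {i : ι} {v : β i}
    (h : x i ≠ v) : hammingDist x (update x i v) = 1 := by
  rw [hammingDist, card_eq_one]
  refine ⟨i, ext fun j => ?_⟩
  by_cases hj : j = i
  · subst hj; simpa using h
  · simp [hj]

theorem hammingDist_update_lt [DecidableEq ι] {x y : ∀ i, β i} {i : ι} (h : x i ≠ y i) :
    hammingDist (update x i (y i)) y < hammingDist x y := by
  refine card_lt_card ⟨fun j => ?_, fun hsub => ?_⟩
  · by_cases hj : j = i
    · subst hj; simp
    · simp [hj]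
  · simpa using hsub (mem_filter.2 ⟨mem_univ i, h⟩)

theorem card_filter_eq_le_hammingDist {σ : Type*} [DecidableEq σ] {x y : ι → σ} {d : σ}
    (hd : ∀ i, y i ≠ d) : #{i | x i = d} ≤ hammingDist x y :=
  card_le_card fun i hi => by
    simp only [mem_filter, mem_univ, true_and] at hi ⊢
    exact hi ▸ (hd i).symm

end Hamming

theorem PMF.sum_toOuterMeasure_le_one {α ι : Type*} (p : PMF α) {T : Finset ι} {O : ι → Set α}
    (hO : (T : Set ι).PairwiseDisjoint O) : ∑ t ∈ T, p.toOuterMeasure (O t) ≤ 1 := by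
  let : MeasurableSpace α := ⊤
  simp_rw [← p.toMeasure_apply_eq_toOuterMeasure]
  rw [← MeasureTheory.measure_biUnion_finset hO fun _ _ => MeasurableSpace.measurableSet_top]
  exact MeasureTheory.prob_le_one

def DifferentiallyPrivate {ι σ α : Type*} [Fintype ι] [DecidableEq σ] (ε : ℝ)
    (M : (ι → σ) → PMF α) : Prop :=
  ∀ S S' : ι → σ, hammingDist S S' = 1 → ∀ O : Set α,
    (M S).toOuterMeasure O ≤ ENNReal.ofReal (Real.exp ε) * (M S').toOuterMeasure O

theorem DifferentiallyPrivate.toOuterMeasure_le_pow {ι σ α : Type*} [Fintype ι] [DecidableEq σ]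
    {ε : ℝ} {M : (ι → σ) → PMF α} (hM : DifferentiallyPrivate ε M) (hε : 0 ≤ ε) (ℓ : ℕ)
    {S S' : ι → σ} (hS : hammingDist S S' ≤ ℓ) (O : Set α) :
    (M S).toOuterMeasure O ≤ ENNReal.ofReal (Real.exp ε) ^ ℓ * (M S').toOuterMeasure O := by
  classical
  have one_le : 1 ≤ ENNReal.ofReal (Real.exp ε) := by simpa using Real.one_le_exp hε
  induction ℓ generalizing S with
  | zero => simp [hammingDist_eq_zero.1 (Nat.le_zero.1 hS)]
  | succ ℓ ih =>
    by_cases hSS : S = S'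
    · subst hSS
      exact le_mul_of_one_le_left' (one_le_pow₀ one_le)
    obtain ⟨i, hi⟩ := Function.ne_iff.1 hSS
    have hstep := hammingDist_update_lt hi
    calc (M S).toOuterMeasure O
        ≤ ENNReal.ofReal (Real.exp ε) * (M (update S i (S' i))).toOuterMeasure O :=
          hM _ _ (hammingDist_update_eq_one hi) O
      _ ≤ ENNReal.ofReal (Real.exp ε) *
            (ENNReal.ofReal (Real.exp ε) ^ ℓ * (M S').toOuterMeasure O) := by
          gcongr; exact ih (by omega)
      _ = _ := by ring

theorem card_mul_le_of_pairwiseDisjoint {X ι α : Type*} (M : X → PMF α) (x₀ : X) (S : ι → X)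
    {O : ι → Set α} {T : Finset ι} (hO : (T : Set ι).PairwiseDisjoint O) {p E : ENNReal}
    (hp : ∀ t ∈ T, p ≤ (M (S t)).toOuterMeasure (O t))
    (hE : ∀ t ∈ T, (M (S t)).toOuterMeasure (O t) ≤ E * (M x₀).toOuterMeasure (O t)) :
    #T * p ≤ E :=
  calc #T * p = ∑ _t ∈ T, p := by rw [sum_const, nsmul_eq_mul]
    _ ≤ ∑ t ∈ T, E * (M x₀).toOuterMeasure (O t) :=
        sum_le_sum fun t ht => (hp t ht).trans (hE t ht)
    _ = E * ∑ t ∈ T, (M x₀).toOuterMeasure (O t) := (mul_sum _ _ _).symm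
    _ ≤ E * 1 := by gcongr; exact (M x₀).sum_toOuterMeasure_le_one hO
    _ = E := mul_one E

def blockNeighbourhood (m j : ℕ) : Set ℕ := {i | j * m < i + m ∧ i < j * m + m}

theorem pairwiseDisjoint_blockNeighbourhood_two_mul (m : ℕ) :
    (Set.univ : Set ℕ).PairwiseDisjoint fun t => blockNeighbourhood m (2 * t) := by
  rintro t - t' - htt'
  refine Set.disjoint_left.2 fun i ⟨hi₁, hi₂⟩ ⟨hi₁', hi₂'⟩ => htt' ?_
  have h₁ : 2 * t * m < (2 * t' + 2) * m := by rw [add_mul]; omega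
  have h₂ : 2 * t' * m < (2 * t + 2) * m := by rw [add_mul]; omega
  have := Nat.lt_of_mul_lt_mul_right h₁
  have := Nat.lt_of_mul_lt_mul_right h₂
  omega

theorem Nat.mod_two_mul_eq_mod_of_even_div {x m : ℕ} (h : Even (x / m)) :
    x % (2 * m) = x % m := by
  rw [mul_comm, Nat.mod_mul, Nat.even_iff.1 h, mul_zero, add_zero]

section BlockString

variable {σ : Type*} [DecidableEq σ] {m : ℕ} [NeZero m]

def blockString (d : σ) (P : Fin m → σ) (r : ℕ → ℕ) (x : ℕ) : σ :=
  if Even (x / m) ∧ r (x / m) ≤ x % m then P (Fin.ofNat m x) else d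

variable (d : σ) (P : Fin m → σ) (r : ℕ → ℕ)

theorem hammingDist_blockString_window_le {j : ℕ} (hj : Even j) :
    hammingDist (fun s : Fin m => blockString d P r (j * m + s)) P ≤ r j := by
  have hdiv (s : Fin m) : (j * m + s) / m = j := by
    rw [add_comm, Nat.add_mul_div_right _ _ (NeZero.pos m), Nat.div_eq_of_lt s.2, zero_add]
  have hmod (s : Fin m) : (j * m + s) % m = s := by
    rw [add_comm, Nat.add_mul_mod_self_right, Nat.mod_eq_of_lt s.2]
  have hP (s : Fin m) : P (Fin.ofNat m (j * m + s)) = P s := congrArg P (Fin.ext (hmod s))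
  refine (card_le_card_of_injOn (t := range (r j)) Fin.val ?_ Fin.val_injective.injOn).trans
    (card_range _).le
  intro s hs
  rw [mem_coe, mem_filter] at hs
  simp only [blockString, hdiv, hmod, hj, true_and, hP] at hs
  rw [coe_range, Set.mem_Iio]
  by_contra h
  exact hs.2 (if_pos (not_lt.1 h))

theorem card_blockString_window_ne_le {c : ℕ} (i : ℕ) (hr : ∀ s : Fin m, c ≤ r ((i + s) / m)) :
    #{s : Fin m | blockString d P r (i + s) ≠ d} ≤ m - c := by
  -- the letters `≠ d` lie at offsets `≥ c` of even blocks, i.e. at residues in `[c, m)` mod `2m`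
  simpa using card_le_card_of_injOn (t := Ico c m) (fun s : Fin m => (i + s) % (2 * m))
    (fun s hs => by
      rw [mem_coe, mem_filter, blockString] at hs
      split_ifs at hs with h
      · rw [coe_Ico, Set.mem_Ico]
        dsimp only
        rw [Nat.mod_two_mul_eq_mod_of_even_div h.1]
        exact ⟨(hr s).trans h.2, Nat.mod_lt _ (NeZero.pos m)⟩
      · exact absurd rfl hs.2)
    (fun s _ t _ hst => Fin.ext <| by
      have := Nat.ModEq.add_left_cancel' i hst
      rwa [Nat.ModEq, Nat.mod_eq_of_lt (by omega), Nat.mod_eq_of_lt (by omega)] at this)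

theorem le_hammingDist_blockString_window {c : ℕ} (hd : d ∉ Set.range P) (hcm : c ≤ m) (i : ℕ)
    (hr : ∀ s : Fin m, c ≤ r ((i + s) / m)) :
    c ≤ hammingDist (fun s : Fin m => blockString d P r (i + s)) P := by
  have hsplit : #{s : Fin m | blockString d P r (i + s) = d} +
      #{s : Fin m | blockString d P r (i + s) ≠ d} = m := by
    simpa using card_filter_add_card_filter_not (s := univ)
      (fun s : Fin m => blockString d P r (i + s) = d)
  have hne := card_blockString_window_ne_le d P r i hr
  have heq := card_filter_eq_le_hammingDist (x := fun s : Fin m => blockString d P r (i + s))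
    (fun s h => hd ⟨s, h⟩)
  omega

theorem hammingDist_blockString_update_le {n : ℕ} {j a : ℕ} (ha : a ≤ r j) :
    hammingDist (fun x : Fin n => blockString d P (update r j a) x)
      (fun x : Fin n => blockString d P r x) ≤ r j - a := by
  have hdiff (x : Fin n) (hx : blockString d P (update r j a) x ≠ blockString d P r x) :
      (x : ℕ) / m = j ∧ a ≤ x % m ∧ x % m < r j := by
    have hj : (x : ℕ) / m = j := by
      by_contra h
      simp [blockString, update_of_ne h] at hx
    simp only [blockString, hj, update_self] at hx
    split_ifs at hx with h₁ h₂ h₂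
    · exact absurd rfl hx
    · exact ⟨hj, h₁.2, not_le.1 fun h => h₂ ⟨h₁.1, h⟩⟩
    · exact absurd ⟨h₂.1, ha.trans h₂.2⟩ h₁
    · exact absurd rfl hx
  refine (card_le_card_of_injOn (t := Ico a (r j)) (fun x : Fin n => x % m) ?_ ?_).trans
    (Nat.card_Ico _ _).le
  · intro x hx
    obtain ⟨-, hax, hxr⟩ := hdiff x (mem_filter.1 hx).2
    exact mem_Ico.2 ⟨hax, hxr⟩
  · intro x hx y hy hxy
    have hxj := (hdiff x (mem_filter.1 hx).2).1
    have hyj := (hdiff y (mem_filter.1 hy).2).1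
    refine Fin.ext ?_
    rw [← Nat.div_add_mod x m, ← Nat.div_add_mod y m, hxj, hyj]
    exact congrArg _ hxy

theorem hammingDist_blockString_update_update_le {n j j' a : ℕ} (ha : a ≤ r j) (ha' : a ≤ r j') :
    hammingDist (fun x : Fin n => blockString d P (update r j a) x)
      (fun x : Fin n => blockString d P (update r j' a) x) ≤ r j - a + (r j' - a) := by
  refine (hammingDist_triangle _ (fun x : Fin n => blockString d P r x) _).trans
    (add_le_add (hammingDist_blockString_update_le d P r ha) ?_)
  rw [hammingDist_comm]
  exact hammingDist_blockString_update_le d P r ha'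

theorem mem_blockNeighbourhood_of_hammingDist_blockString_window_lt {c a j i : ℕ}
    (hd : d ∉ Set.range P) (hcm : c ≤ m)
    (h : hammingDist (fun s : Fin m => blockString d P (update (fun _ => c) j a) (i + s)) P < c) :
    i ∈ blockNeighbourhood m j := by
  show j * m < i + m ∧ i < j * m + m
  by_contra hfar
  refine (le_hammingDist_blockString_window d P _ hd hcm i fun s => ?_).not_gt h
  rw [update_of_ne]
  intro hs
  have h₁ := Nat.div_mul_le_self (i + s) m
  have h₂ := Nat.lt_div_mul_add (a := i + s) (NeZero.pos m)
  rw [hs] at h₁ h₂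
  omega

end BlockString

theorem log_add_log_le_of_mul_le_exp_pow {x p ε : ℝ} (hx : 0 < x) (hp : 0 < p) {N : ℕ}
    (h : x * p ≤ Real.exp ε ^ N) : Real.log x + Real.log p ≤ N * ε := by
  rwa [← Real.log_mul hx.ne' hp.ne', Real.log_le_iff_le_exp (by positivity), Real.exp_nat_mul]

theorem additive_error_lower_bound_of_card_mul_le {m N L α : ℕ} {ε : ℝ} (hm : 0 < m)
    (hN : 0 < N) (hNL : N ≤ 2 * L) (hε : 0 < ε)
    (h : (L : ENNReal) * (2 / 3) ≤ ENNReal.ofReal (Real.exp ε) ^ (2 * (α + 1))) :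
    (2 * ε)⁻¹ * (Real.log (((m * N : ℕ) : ℝ) / (2 * m)) + Real.log (2 / 3)) - 1 ≤ α := by
  have hL : ENNReal.ofReal ((L : ℝ) * (2 / 3)) = (L : ENNReal) * (2 / 3) := by
    rw [ENNReal.ofReal_mul (by positivity), ENNReal.ofReal_natCast,
      ENNReal.ofReal_div_of_pos (by norm_num)]
    norm_num
  rw [← ENNReal.ofReal_pow (Real.exp_nonneg ε), ← hL,
    ENNReal.ofReal_le_ofReal_iff (by positivity)] at h
  have hNm : ((m * N : ℕ) : ℝ) / (2 * m) ≤ L := by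
    rw [div_le_iff₀ (by positivity)]
    have := Nat.mul_le_mul_left m hNL
    exact_mod_cast (show m * N ≤ L * (2 * m) by linarith)
  have hlog := log_add_log_le_of_mul_le_exp_pow (by positivity) (by norm_num : (0 : ℝ) < 2 / 3)
    ((mul_le_mul_of_nonneg_right hNm (by norm_num)).trans h)
  rw [sub_le_iff_le_add, inv_mul_le_iff₀ (by positivity)]
  push_cast at hlog ⊢
  linarith

theorem packing_lower_bound_additive_error_general {σ : Type*} [DecidableEq σ]
    {n m k α : ℕ} (hm : 0 < m) (hmn : m ≤ n) (hmod : m ∣ n)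
    (P : Fin m → σ) (hdollar : ∃ d : σ, d ∉ Set.range P)
    (hα : α + k + 1 < m)
    (ε : ℝ) (hε : 0 < ε) (Alg : (Fin n → σ) → PMF ℕ)
    (hDP : ∀ S S' : Fin n → σ, hammingDist S S' = 1 → ∀ Out : Set ℕ,
      (Alg S).toOuterMeasure Out ≤
        ENNReal.ofReal (Real.exp ε) * (Alg S').toOuterMeasure Out)
    (hUtil : ∀ S : Fin n → σ,
      (∃ j, j ≤ n - m ∧
        hammingDist
          (fun t : Fin m => S ⟨(j + t.1) % n, Nat.mod_lt _ (lt_of_lt_of_le hm hmn)⟩) P ≤ k) →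
      (2 / 3 : ENNReal) ≤ (Alg S).toOuterMeasure
        {i | i ≤ n - m ∧
          hammingDist
            (fun t : Fin m => S ⟨(i + t.1) % n, Nat.mod_lt _ (lt_of_lt_of_le hm hmn)⟩) P ≤
            k + α}) :
    (2 * ε)⁻¹ * (Real.log ((n : ℝ) / (2 * m)) + Real.log (2 / 3)) - 1 ≤ (α : ℝ) := by
  obtain ⟨d, hd⟩ := hdollar
  obtain ⟨N, rfl⟩ := hmod
  have : NeZero m := ⟨hm.ne'⟩
  set S : ℕ → Fin (m * N) → σ := fun j x => blockString d P (update (fun _ => k + α + 1) j k) x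
  have hwindow (j i : ℕ) (hi : i ≤ m * N - m) :
      (fun t : Fin m => S j ⟨(i + t) % (m * N), Nat.mod_lt _ (lt_of_lt_of_le hm hmn)⟩) =
        fun t : Fin m => blockString d P (update (fun _ => k + α + 1) j k) (i + t) := by
    funext t
    simp only [S, Nat.mod_eq_of_lt (show i + t < m * N by omega)]
  set O : ℕ → Set ℕ := fun j => {i | i ≤ m * N - m ∧
    hammingDist (fun t : Fin m => S j ⟨(i + t) % (m * N), Nat.mod_lt _ (lt_of_lt_of_le hm hmn)⟩)
      P ≤ k + α}
  have hsucc (t : ℕ) (ht : t ∈ range ((N + 1) / 2)) :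
      2 / 3 ≤ (Alg (S (2 * t))).toOuterMeasure (O (2 * t)) := by
    have : 2 * t * m + m ≤ m * N := by
      rw [mul_comm m, ← Nat.succ_mul]; exact Nat.mul_le_mul_right m (by simp at ht; omega)
    refine hUtil _ ⟨2 * t * m, by omega, ?_⟩
    rw [hwindow _ _ (by omega)]
    simpa using hammingDist_blockString_window_le d P (update (fun _ => k + α + 1) (2 * t) k)
      (even_two_mul t)
  have hdisj : (range ((N + 1) / 2) : Set ℕ).PairwiseDisjoint fun t => O (2 * t) :=
    ((pairwiseDisjoint_blockNeighbourhood_two_mul m).subset (Set.subset_univ _)).mono_on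
      fun t _ i ⟨hi, hdist⟩ => by
        rw [hwindow _ _ hi] at hdist
        exact mem_blockNeighbourhood_of_hammingDist_blockString_window_lt d P hd (by omega)
          (Nat.lt_succ_of_le hdist)
  have hgroup (t : ℕ) (_ : t ∈ range ((N + 1) / 2)) :
      (Alg (S (2 * t))).toOuterMeasure (O (2 * t)) ≤
        ENNReal.ofReal (Real.exp ε) ^ (2 * (α + 1)) * (Alg (S 0)).toOuterMeasure (O (2 * t)) :=
    DifferentiallyPrivate.toOuterMeasure_le_pow hDP hε.le _
      ((hammingDist_blockString_update_update_le d P _ (by omega) (by omega)).trans (by omega)) _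
  have hpack := card_mul_le_of_pairwiseDisjoint Alg (S 0) (fun t => S (2 * t)) hdisj hsucc hgroup
  rw [card_range] at hpack
  exact additive_error_lower_bound_of_card_mul_le hm
    (Nat.pos_of_mul_pos_left (by omega : 0 < m * N)) (by omega) hε hpack

/-- Packing lower bound (additive-error bound): any `ε`-differentially private
algorithm on strings of length `n` that, whenever some window of `S` is within
Hamming distance `k` of `P`, outputs with probability at least `2/3` a position
whose window is within distance `k + α` of `P` (with `α < m − k − 1`), must have
`α ≥ (2ε)⁻¹ (ln(n/(2m)) + ln(2/3)) − 1`. -/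
theorem packing_lower_bound_additive_error {σ : Type*} [DecidableEq σ]
    {n m k α : ℕ} (hm : 0 < m) (hmn : m ≤ n) (hmod : m ∣ n)
    (P : Fin m → σ) (hdollar : ∃ d : σ, d ∉ Set.range P)
    (hk : k < m) (hα : α + k + 1 < m)
    (ε : ℝ) (hε : 0 < ε) (Alg : (Fin n → σ) → PMF ℕ)
    (hDP : ∀ S S' : Fin n → σ, hammingDist S S' = 1 → ∀ Out : Set ℕ,
      (Alg S).toOuterMeasure Out ≤
        ENNReal.ofReal (Real.exp ε) * (Alg S').toOuterMeasure Out)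
    (hUtil : ∀ S : Fin n → σ,
      (∃ j, j ≤ n - m ∧
        hammingDist
          (fun t : Fin m => S ⟨(j + t.1) % n, Nat.mod_lt _ (lt_of_lt_of_le hm hmn)⟩) P ≤ k) →
      (2 / 3 : ENNReal) ≤ (Alg S).toOuterMeasure
        {i | i ≤ n - m ∧
          hammingDist
            (fun t : Fin m => S ⟨(i + t.1) % n, Nat.mod_lt _ (lt_of_lt_of_le hm hmn)⟩) P ≤
            k + α}) :
    (2 * ε)⁻¹ * (Real.log ((n : ℝ) / (2 * m)) + Real.log (2 / 3)) - 1 ≤ (α : ℝ) :=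
  packing_lower_bound_additive_error_general hm hmn hmod P hdollar hα ε hε Alg hDP hUtil
end

section
/- For the lower-bound construction strings S_j and S_i (even i ≠ j) where block j of S_j is $^k P[k,m−1], all other even blocks are $^{k+α+1} P[k+α+1,m−1], and all remaining positions are $: the Hamming distance satisfies dist_H(S_i, S_j) = 2(α+1), provided P[k, k+α] contains no $ symbol. -/
def lbString {σ : Type*} {m : ℕ} (n : ℕ) (hm : 0 < m) (P : Fin m → σ)
    (dollar : σ) (k α j : ℕ) : Fin n → σ :=
  fun q =>
    if q.1 / m = j then
      if k ≤ q.1 % m then P ⟨q.1 % m, Nat.mod_lt _ hm⟩ else dollar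
    else if Even (q.1 / m) then
      if k + α + 1 ≤ q.1 % m then P ⟨q.1 % m, Nat.mod_lt _ hm⟩ else dollar
    else dollar

/-- For distinct even block indices `i ≠ j`, the construction strings `S_i` and
`S_j` are at Hamming distance exactly `2(α+1)`, provided `P[k, k+α]` contains no
`$` symbol. -/
theorem lb_construction_distance {σ : Type*} [DecidableEq σ] {n m : ℕ}
    (hm : 0 < m) (hmod : m ∣ n) (P : Fin m → σ) (dollar : σ)
    (k α : ℕ) (hka : k + α + 1 ≤ m)
    (hnod : ∀ t : Fin m, k ≤ t.1 → t.1 ≤ k + α → P t ≠ dollar)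
    (i j : ℕ) (hi : i < n / m) (hj : j < n / m)
    (hie : Even i) (hje : Even j) (hij : i ≠ j) :
    hammingDist (lbString n hm P dollar k α i) (lbString n hm P dollar k α j) =
      2 * (α + 1) := by
  classical
  have hdm : 0 < n / m := Nat.lt_of_le_of_lt (Nat.zero_le i) hi
  have hmn : (n / m) * m = n := Nat.div_mul_cancel hmod
  have hn : 0 < n := by nlinarith
  have hblock : ∀ b, b < n / m → (b + 1) * m ≤ n := by
    intro b hb
    calc (b + 1) * m ≤ (n / m) * m := Nat.mul_le_mul_right _ hb
    _ = n := hmn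
  have key : ∀ q : Fin n,
      lbString n hm P dollar k α i q ≠ lbString n hm P dollar k α j q ↔
        ((q.1 / m = i ∨ q.1 / m = j) ∧ k ≤ q.1 % m ∧ q.1 % m ≤ k + α) := by
    intro q
    have hr : q.1 % m < m := Nat.mod_lt _ hm
    have hPne : ∀ (h : k ≤ q.1 % m) (h2 : q.1 % m ≤ k + α),
        P ⟨q.1 % m, hr⟩ ≠ dollar := fun h h2 => hnod _ h h2
    simp only [lbString]
    constructor
    · intro h
      by_cases hbi : q.1 / m = i
      · have hbj : q.1 / m ≠ j := by rw [hbi]; exact hij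
        rw [if_pos hbi, if_neg hbj,
          if_pos (show Even (q.1 / m) by rw [hbi]; exact hie)] at h
        split_ifs at h with h1 h2 h2 <;> first | (exact absurd rfl h) | omega |
          exact ⟨Or.inl hbi, h1, by omega⟩
      · by_cases hbj : q.1 / m = j
        · rw [if_neg hbi, if_pos hbj,
            if_pos (show Even (q.1 / m) by rw [hbj]; exact hje)] at h
          split_ifs at h with h1 h2 h2 <;> first | (exact absurd rfl h) | omega |
            exact ⟨Or.inr hbj, h2, by omega⟩
        · rw [if_neg hbi, if_neg hbj] at h
          exact absurd rfl h
    · rintro ⟨hb, h1, h2⟩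
      rcases hb with hbi | hbj
      · have hbj : q.1 / m ≠ j := by rw [hbi]; exact hij
        rw [if_pos hbi, if_neg hbj,
          if_pos (show Even (q.1 / m) by rw [hbi]; exact hie), if_pos h1,
          if_neg (by omega : ¬ k + α + 1 ≤ q.1 % m)]
        exact hPne h1 h2
      · have hbi : q.1 / m ≠ i := by rw [hbj]; exact fun h => hij h.symm
        rw [if_neg hbi, if_pos hbj,
          if_pos (show Even (q.1 / m) by rw [hbj]; exact hje), if_pos h1,
          if_neg (by omega : ¬ k + α + 1 ≤ q.1 % m)]
        exact (hPne h1 h2).symm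
  have hlt : ∀ b, b < n / m → ∀ t, t < α + 1 → b * m + k + t < n := by
    intro b hb t ht
    have h1 := hblock b hb
    have : b * m + m ≤ n := by nlinarith
    omega
  set E : ℕ → Finset (Fin n) := fun b =>
    (Finset.range (α + 1)).image
      (fun t => (⟨(b * m + k + t) % n, Nat.mod_lt _ hn⟩ : Fin n)) with hE
  have hmemE : ∀ b, b < n / m → ∀ q : Fin n,
      q ∈ E b ↔ (q.1 / m = b ∧ k ≤ q.1 % m ∧ q.1 % m ≤ k + α) := by
    intro b hb q
    simp only [hE, Finset.mem_image, Finset.mem_range]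
    constructor
    · rintro ⟨t, ht, rfl⟩
      have hlt' := hlt b hb t ht
      have hmod' : (b * m + k + t) % n = b * m + k + t := Nat.mod_eq_of_lt hlt'
      have hkt : k + t < m := by omega
      have hre : b * m + k + t = k + t + b * m := by ring
      have hdiv : (b * m + k + t) / m = b := by
        rw [hre, Nat.add_mul_div_right _ _ hm, Nat.div_eq_of_lt hkt, Nat.zero_add]
      have hmod2 : (b * m + k + t) % m = k + t := by
        rw [hre, Nat.add_mul_mod_self_right, Nat.mod_eq_of_lt hkt]
      simp only [hmod']
      exact ⟨hdiv, by omega, by omega⟩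
    · rintro ⟨hqb, h1, h2⟩
      refine ⟨q.1 % m - k, by omega, ?_⟩
      have heq : b * m + k + (q.1 % m - k) = b * m + q.1 % m := by omega
      have hq : b * m + q.1 % m = q.1 := by
        conv_rhs => rw [← Nat.div_add_mod q.1 m]
        rw [hqb]; ring
      ext
      simp [heq, hq, Nat.mod_eq_of_lt q.2]
  have hcardE : ∀ b, b < n / m → (E b).card = α + 1 := by
    intro b hb
    rw [hE]
    rw [Finset.card_image_of_injOn, Finset.card_range]
    intro t ht t' ht' hEq
    simp only [Finset.coe_range, Set.mem_Iio] at ht ht'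
    have hv := congrArg Fin.val hEq
    simp only [Nat.mod_eq_of_lt (hlt b hb t ht), Nat.mod_eq_of_lt (hlt b hb t' ht')] at hv
    omega
  have hfilter : (Finset.univ.filter fun q : Fin n =>
      lbString n hm P dollar k α i q ≠ lbString n hm P dollar k α j q) = E i ∪ E j := by
    ext q
    simp only [Finset.mem_filter, Finset.mem_univ, true_and, Finset.mem_union,
      key q, hmemE i hi q, hmemE j hj q]
    tauto
  have hdisj : Disjoint (E i) (E j) := by
    rw [Finset.disjoint_left]
    intro q hqi hqj
    have h1 := ((hmemE i hi q).1 hqi).1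
    have h2 := ((hmemE j hj q).1 hqj).1
    exact hij (h1 ▸ h2)
  show (Finset.univ.filter fun q : Fin n =>
      lbString n hm P dollar k α i q ≠ lbString n hm P dollar k α j q).card = 2 * (α + 1)
  rw [hfilter, Finset.card_union_of_disjoint hdisj, hcardE i hi, hcardE j hj]
  ring
end
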